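/- Let G be a group, (I₀, ≤, ∨, 0) a join-semilattice with 0, δ : G → I₀ a valuation, and K any group. Define δ ∗ 0 : G ∗ K → I₀ by (δ ∗ 0)(x) = δ(u₀) ∨ δ(u₁) ∨ ⋯ ∨ δ(u_n) when x has reduced expression u₀v₁u₁⋯v_nu_n with u_i ∈ G and v_j ∈ K. Then δ ∗ 0 is a valuation on G ∗ K, it extends δ, and for every b ∈ I₀ the level subgroup (G ∗ K)_{δ∗0}(b) equals the subgroup generated by G_δ(b) and K (which is their free product G_δ(b) ∗ K). -/

import Mathlib

/-!
Every element of a free product has a unique reduced word, and `δ ∗ 0` is the join of the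
letter values of that word. Multiplying a reduced word on the left by a letter only alters its
first letter, where the valuation inequality of the factor applies; hence `δ ∗ 0` of a product
of letters is at most the join of their values. Applied to concatenated and to inverted reduced
words this gives the valuation axioms, and it shows that the reduced word realises the minimum
over all expressions. Consequently `δ ∗ 0 x ≤ b` exactly when `x` is a product of letters from
`G_δ(b)` and `K`. Finally, injective maps of the factors send reduced words to reduced words,
so `G_δ(b) ∗ K → G ∗ K` is injective.
-/

/-- The level subgroup `G_δ(b) = {g | δ g ≤ b}` of a valuation `δ`. -/
def levelSubgroup {G : Type*} [Group G] {I₀ : Type*} [SemilatticeSup I₀] [OrderBot I₀]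
    (δ : G → I₀) (h1 : δ 1 = ⊥) (hinv : ∀ g : G, δ g⁻¹ = δ g)
    (hmul : ∀ g h : G, δ (g * h) ≤ δ g ⊔ δ h) (b : I₀) : Subgroup G where
  carrier := {g : G | δ g ≤ b}
  one_mem' := by simp [h1]
  mul_mem' := fun hx hy => le_trans (hmul _ _) (sup_le hx hy)
  inv_mem' := fun hx => by simpa [hinv] using hx

/-- The join of the values of the letters of a word, where letters from `G` are evaluated
by `δ` and letters from `K` get the value `⊥ = 0`. -/
def wordVal {G K : Type*} {I₀ : Type*} [SemilatticeSup I₀] [OrderBot I₀]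
    (δ : G → I₀) (l : List (G ⊕ K)) : I₀ :=
  (l.map (Sum.elim δ (fun _ => (⊥ : I₀)))).foldr (· ⊔ ·) ⊥

/-- The letters of the free product `G ∗ K`. -/
def letterProd {G K : Type*} [Group G] [Group K] : G ⊕ K → Monoid.Coprod G K :=
  Sum.elim (fun g => Monoid.Coprod.inl g) (fun k => Monoid.Coprod.inr k)

open Monoid

section Valuation

variable {I₀ : Type*} [SemilatticeSup I₀] [OrderBot I₀]

structure IsGroupValuation {G : Type*} [Group G] (δ : G → I₀) : Prop where
  map_one : δ 1 = ⊥
  map_inv : ∀ g, δ g⁻¹ = δ g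
  map_mul_le : ∀ g h, δ (g * h) ≤ δ g ⊔ δ h

namespace IsGroupValuation

variable {G H : Type*} [Group G] [Group H]

theorem bot : IsGroupValuation (fun _ : G => (⊥ : I₀)) :=
  ⟨rfl, fun _ => rfl, fun _ _ => bot_le⟩

theorem comp {δ : G → I₀} (hδ : IsGroupValuation δ) (f : H →* G) : IsGroupValuation (δ ∘ f) where
  map_one := by simp [hδ.map_one]
  map_inv g := by simp [hδ.map_inv]
  map_mul_le g h := by simpa using hδ.map_mul_le (f g) (f h)

end IsGroupValuation

end Valuation

namespace Monoid.CoprodI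

variable {ι : Type*} {M : ι → Type*}

section Valuation

variable {I₀ : Type*} [SemilatticeSup I₀] [OrderBot I₀] (v : ∀ i, M i → I₀)

def letterSup (l : List (Σ i, M i)) : I₀ :=
  (l.map fun p => v p.1 p.2).foldr (· ⊔ ·) ⊥

@[simp]
theorem letterSup_nil : letterSup v ([] : List (Σ i, M i)) = ⊥ := rfl

@[simp]
theorem letterSup_cons (p : Σ i, M i) (l : List (Σ i, M i)) :
    letterSup v (p :: l) = v p.1 p.2 ⊔ letterSup v l := rfl

theorem letterSup_le_iff {l : List (Σ i, M i)} {b : I₀} :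
    letterSup v l ≤ b ↔ ∀ p ∈ l, v p.1 p.2 ≤ b := by
  rw [letterSup, ← Multiset.sup_coe, Multiset.sup_le]
  simp only [Multiset.mem_coe, List.forall_mem_map]

theorem le_letterSup {l : List (Σ i, M i)} {p : Σ i, M i} (hp : p ∈ l) :
    v p.1 p.2 ≤ letterSup v l :=
  (letterSup_le_iff v).1 le_rfl p hp

variable [∀ i, Group (M i)] [∀ i, DecidableEq (M i)]

theorem letterSup_rcons (hv : ∀ i, v i 1 = ⊥) {i : ι} (p : Word.Pair M i) :
    letterSup v (Word.rcons p).toList = v i p.head ⊔ letterSup v p.tail.toList := by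
  rw [Word.rcons]
  split_ifs with h
  · rw [h, hv, bot_sup_eq]
  · rfl

variable [DecidableEq ι]

noncomputable def supVal (x : CoprodI M) : I₀ :=
  letterSup v (Word.equiv x).toList

@[simp]
theorem supVal_one : supVal v (1 : CoprodI M) = ⊥ := by
  rw [supVal, show Word.equiv (1 : CoprodI M) = Word.empty from one_smul (CoprodI M) _]
  rfl

variable {v}

theorem supVal_of_mul_le (hv : ∀ i, IsGroupValuation (v i)) {i : ι} (m : M i) (x : CoprodI M) :
    supVal v (of m * x) ≤ v i m ⊔ supVal v x := by
  set p := Word.equivPair i (Word.equiv x)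
  have hx : Word.rcons p = Word.equiv x := (Word.equivPair i).symm_apply_apply _
  calc supVal v (of m * x) = v i (m * p.head) ⊔ letterSup v p.tail.toList := by
        rw [supVal, show Word.equiv (of m * x) = of m • Word.equiv x from mul_smul (of m) x _,
          Word.of_smul_def, letterSup_rcons v fun i => (hv i).map_one]
    _ ≤ v i m ⊔ (v i p.head ⊔ letterSup v p.tail.toList) := by
        rw [← sup_assoc]; exact sup_le_sup_right ((hv i).map_mul_le _ _) _
    _ = v i m ⊔ supVal v x := by
        rw [← letterSup_rcons v fun i => (hv i).map_one, hx, supVal]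

theorem supVal_list_prod_le (hv : ∀ i, IsGroupValuation (v i)) (l : List (Σ i, M i)) :
    supVal v (l.map fun p => of p.2).prod ≤ letterSup v l := by
  induction l with
  | nil => simp
  | cons p l ih =>
    rw [List.map_cons, List.prod_cons, letterSup_cons]
    exact (supVal_of_mul_le hv p.2 _).trans (sup_le_sup_left ih _)

theorem supVal_of (hv : ∀ i, v i 1 = ⊥) {i : ι} (m : M i) : supVal v (of m) = v i m := by
  have hempty : Word.equivPair i (Word.empty : Word M) = ⟨1, Word.empty, by simp [Word.fstIdx]⟩ :=
    Word.equivPair_eq_of_fstIdx_ne _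
  rw [supVal, show Word.equiv (of m) = of m • Word.empty from rfl, Word.of_smul_def,
    letterSup_rcons v hv, hempty]
  simp

theorem isGroupValuation_supVal (hv : ∀ i, IsGroupValuation (v i)) :
    IsGroupValuation (supVal v) := by
  have hprod (x : CoprodI M) : ((Word.equiv x).toList.map fun p => of p.2).prod = x :=
    Word.equiv.symm_apply_apply x
  have inv_le (x : CoprodI M) : supVal v x⁻¹ ≤ supVal v x := by
    have : x⁻¹ = (((Word.equiv x).toList.map fun p => (⟨p.1, p.2⁻¹⟩ : Σ i, M i)).reverse.map
        fun p => of p.2).prod := by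
      rw [← hprod x, List.prod_inv_reverse, List.map_reverse, List.map_map, List.map_map, hprod]
      rfl
    rw [this]
    refine (supVal_list_prod_le hv _).trans ((letterSup_le_iff v).2 ?_)
    simp only [List.mem_reverse, List.mem_map]
    rintro _ ⟨p, hp, rfl⟩
    rw [(hv p.1).map_inv]
    exact le_letterSup v hp
  refine ⟨supVal_one v, fun x => le_antisymm (inv_le x) ?_, fun x y => ?_⟩
  · simpa using inv_le x⁻¹
  · rw [← hprod x, ← hprod y, ← List.prod_append, ← List.map_append, hprod, hprod]
    refine (supVal_list_prod_le hv _).trans ((letterSup_le_iff v).2 ?_)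
    intro p hp
    rcases List.mem_append.1 hp with hp | hp
    · exact le_sup_of_le_left (le_letterSup v hp)
    · exact le_sup_of_le_right (le_letterSup v hp)

end Valuation

section Map

variable {N : ι → Type*} [∀ i, Group (M i)] [∀ i, Group (N i)]

def Word.mapOfInjective (f : ∀ i, N i →* M i) (hf : ∀ i, Function.Injective (f i))
    (w : Word N) : Word M where
  toList := w.toList.map fun p => ⟨p.1, f p.1 p.2⟩
  ne_one := by
    simp only [List.mem_map]
    rintro _ ⟨p, hp, rfl⟩
    exact (map_ne_one_iff (f p.1) (hf p.1)).2 (w.ne_one p hp)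
  chain_ne := List.isChain_map _ |>.2 w.chain_ne

theorem Word.prod_mapOfInjective (f : ∀ i, N i →* M i) (hf : ∀ i, Function.Injective (f i))
    (w : Word N) : (w.mapOfInjective f hf).prod = lift (fun i => of.comp (f i)) w.prod := by
  simp only [Word.prod, Word.mapOfInjective, map_list_prod, List.map_map]
  exact congr_arg _ (List.map_congr_left fun p _ => (lift_of (fun i => of.comp (f i)) p.2).symm)

theorem lift_comp_of_injective [DecidableEq ι] [∀ i, DecidableEq (M i)]
    [∀ i, DecidableEq (N i)] (f : ∀ i, N i →* M i) (hf : ∀ i, Function.Injective (f i)) :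
    Function.Injective (lift fun i => of.comp (f i)) := by
  refine (injective_iff_map_eq_one _).2 fun x hx => ?_
  have hx' : (Word.equiv x).prod = x := Word.equiv.symm_apply_apply x
  have hmap : (Word.equiv x).mapOfInjective f hf = Word.empty := by
    have h : Word.equiv (Word.prod _) = _ := Word.equiv.apply_symm_apply
      ((Word.equiv x).mapOfInjective f hf)
    rw [Word.prod_mapOfInjective, hx', hx] at h
    exact h.symm.trans (one_smul (CoprodI M) _)
  have hw : Word.equiv x = Word.empty :=
    Word.ext (List.map_eq_nil_iff.1 congr(Word.toList $hmap))
  rw [← hx', hw, Word.prod_empty]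

end Map

end Monoid.CoprodI

universe u v u' v'

namespace Monoid.Coprod

open CoprodI

section Summand

variable (G : Type u) (K : Type v) [Group G] [Group K]

/-- Reduced words are available in Mathlib only for `CoprodI`, so `G ∗ K` is identified with the
free product of this `Bool`-indexed family, lifted to a common universe. -/
def Summand : Bool → Type (max u v)
  | true => ULift.{v} G
  | false => ULift.{u} K

instance : ∀ b, Group (Summand G K b)
  | true => inferInstanceAs (Group (ULift G))
  | false => inferInstanceAs (Group (ULift K))

noncomputable instance : ∀ b, DecidableEq (Summand G K b) := fun _ => Classical.decEq _

noncomputable def toCoprodI : G ∗ K →* CoprodI (Summand G K) :=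
  lift (of (M := Summand G K) (i := true) |>.comp MulEquiv.ulift.symm.toMonoidHom)
    (of (M := Summand G K) (i := false) |>.comp MulEquiv.ulift.symm.toMonoidHom)

noncomputable def ofCoprodI : CoprodI (Summand G K) →* G ∗ K :=
  CoprodI.lift (M := Summand G K) fun
    | true => inl.comp MulEquiv.ulift.toMonoidHom
    | false => inr.comp MulEquiv.ulift.toMonoidHom

noncomputable def equivCoprodI : G ∗ K ≃* CoprodI (Summand G K) :=
  MonoidHom.toMulEquiv (toCoprodI G K) (ofCoprodI G K)
    (by ext <;> simp [toCoprodI, ofCoprodI] <;> rfl)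
    (CoprodI.ext_hom _ _ fun b => by cases b <;> ext <;> simp [toCoprodI, ofCoprodI] <;> rfl)

variable {G K}

@[simp]
theorem equivCoprodI_inl (g : G) :
    equivCoprodI G K (inl g) = of (M := Summand G K) (i := true) (ULift.up g) := by
  simp [equivCoprodI, toCoprodI]; rfl

@[simp]
theorem equivCoprodI_inr (k : K) :
    equivCoprodI G K (inr k) = of (M := Summand G K) (i := false) (ULift.up k) := by
  simp [equivCoprodI, toCoprodI]; rfl

end Summand

theorem map_injective {G : Type u} {K : Type v} {G' : Type u'} {K' : Type v'} [Group G] [Group G'] [Group K] [Group K']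
    {f : G' →* G} {g : K' →* K} (hf : Function.Injective f) (hg : Function.Injective g) :
    Function.Injective (map f g) := by
  let F : ∀ b, Summand G' K' b →* Summand G K b
    | true => MulEquiv.ulift.symm.toMonoidHom.comp (f.comp MulEquiv.ulift.toMonoidHom)
    | false => MulEquiv.ulift.symm.toMonoidHom.comp (g.comp MulEquiv.ulift.toMonoidHom)
  have hF : ∀ b, Function.Injective (F b)
    | true => fun x y h => ULift.ext _ _ (hf congr(ULift.down $h))
    | false => fun x y h => ULift.ext _ _ (hg congr(ULift.down $h))
  have hconj : (equivCoprodI G K).toMonoidHom.comp (map f g) =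
      (CoprodI.lift fun b => of.comp (F b)).comp (equivCoprodI G' K').toMonoidHom := by
    ext <;> simp only [MonoidHom.comp_apply, MulEquiv.coe_toMonoidHom, map_apply_inl,
      map_apply_inr, equivCoprodI_inl, equivCoprodI_inr] <;> rfl
  rw [← (equivCoprodI G K).injective.of_comp_iff, ← MulEquiv.coe_toMonoidHom,
    ← MonoidHom.coe_comp, hconj, MonoidHom.coe_comp]
  exact (CoprodI.lift_comp_of_injective F hF).comp (equivCoprodI G' K').injective

section Valuation

variable {G : Type u} {K : Type v} {I₀ : Type*} [SemilatticeSup I₀] [OrderBot I₀] {δ : G → I₀}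

def sumEquivSigmaSummand : G ⊕ K ≃ Σ b, Summand G K b where
  toFun
    | .inl g => ⟨true, ULift.up g⟩
    | .inr k => ⟨false, ULift.up k⟩
  invFun
    | ⟨true, g⟩ => .inl g.down
    | ⟨false, k⟩ => .inr k.down
  left_inv s := by cases s <;> rfl
  right_inv
    | ⟨true, _⟩ => rfl
    | ⟨false, _⟩ => rfl

def summandVal (δ : G → I₀) : ∀ b, Summand G K b → I₀
  | true => fun g => δ g.down
  | false => fun _ => ⊥

theorem wordVal_eq_letterSup (l : List (G ⊕ K)) :
    wordVal δ l = letterSup (summandVal δ) (l.map sumEquivSigmaSummand) := by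
  induction l with
  | nil => rfl
  | cons s l ih =>
    rw [List.map_cons, letterSup_cons, ← ih]
    cases s <;> rfl

variable [Group G] [Group K]

theorem equivCoprodI_list_prod (l : List (G ⊕ K)) :
    equivCoprodI G K (l.map letterProd).prod =
      ((l.map sumEquivSigmaSummand).map fun p => of p.2).prod := by
  rw [map_list_prod, List.map_map, List.map_map]
  exact congr_arg _ (List.map_congr_left fun s _ => by cases s <;> simp [letterProd] <;> rfl)

theorem isGroupValuation_summandVal (hδ : IsGroupValuation δ) :
    ∀ b, IsGroupValuation (summandVal (K := K) δ b)
  | true => hδ.comp (MulEquiv.ulift (α := G)).toMonoidHom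
  | false => .bot

noncomputable def extendByBot (δ : G → I₀) : G ∗ K → I₀ :=
  supVal (summandVal δ) ∘ equivCoprodI G K

theorem isGroupValuation_extendByBot (hδ : IsGroupValuation δ) :
    IsGroupValuation (extendByBot (K := K) δ) :=
  (isGroupValuation_supVal (isGroupValuation_summandVal hδ)).comp (equivCoprodI G K).toMonoidHom

theorem extendByBot_inl (hδ : δ 1 = ⊥) (g : G) : extendByBot (K := K) δ (inl g) = δ g := by
  simp only [extendByBot, Function.comp_apply, equivCoprodI_inl]
  exact supVal_of (fun | true => hδ | false => rfl) _

theorem extendByBot_inr (hδ : δ 1 = ⊥) (k : K) : extendByBot δ (inr k) = ⊥ := by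
  simp only [extendByBot, Function.comp_apply, equivCoprodI_inr]
  exact supVal_of (fun | true => hδ | false => rfl) _

theorem extendByBot_list_prod_le (hδ : IsGroupValuation δ) (l : List (G ⊕ K)) :
    extendByBot δ (l.map letterProd).prod ≤ wordVal δ l := by
  rw [extendByBot, Function.comp_apply, equivCoprodI_list_prod, wordVal_eq_letterSup]
  exact supVal_list_prod_le (isGroupValuation_summandVal hδ) _

theorem exists_wordVal_eq_extendByBot (x : G ∗ K) :
    ∃ l : List (G ⊕ K), (l.map letterProd).prod = x ∧ wordVal δ l = extendByBot δ x := by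
  set w := Word.equiv (equivCoprodI G K x)
  have hw : (w.toList.map sumEquivSigmaSummand.symm).map sumEquivSigmaSummand = w.toList := by
    simp
  refine ⟨w.toList.map sumEquivSigmaSummand.symm, ?_, ?_⟩
  · apply (equivCoprodI G K).injective
    rw [equivCoprodI_list_prod, hw]
    exact Word.equiv.symm_apply_apply _
  · rw [wordVal_eq_letterSup, hw]
    rfl

theorem setOf_extendByBot_le (hδ : IsGroupValuation δ) (b : I₀) :
    {x : G ∗ K | extendByBot δ x ≤ b} =
      (Subgroup.closure (inl '' {g | δ g ≤ b} ∪ Set.range (inr : K →* G ∗ K)) : Set (G ∗ K)) := by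
  have hval := isGroupValuation_extendByBot (K := K) hδ
  ext x
  refine ⟨fun hx => ?_, fun hx => ?_⟩
  · obtain ⟨l, rfl, hl⟩ := exists_wordVal_eq_extendByBot (δ := δ) x
    replace hx : wordVal δ l ≤ b := hl.le.trans hx
    clear hl
    induction l with
    | nil => exact Subgroup.one_mem _
    | cons s l ih =>
      have hs : Sum.elim δ (fun _ => ⊥) s ≤ b ∧ wordVal δ l ≤ b := sup_le_iff.1 hx
      rw [List.map_cons, List.prod_cons]
      refine Subgroup.mul_mem _ (Subgroup.subset_closure ?_) (ih hs.2)
      cases s with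
      | inl g => exact .inl ⟨g, hs.1, rfl⟩
      | inr k => exact .inr ⟨k, rfl⟩
  · refine (Subgroup.closure_le
      (levelSubgroup _ hval.map_one hval.map_inv hval.map_mul_le b)).2 ?_ hx
    rintro _ (⟨g, hg, rfl⟩ | ⟨k, rfl⟩)
    · exact (extendByBot_inl hδ.map_one g).trans_le hg
    · exact (extendByBot_inr hδ.map_one k).trans_le bot_le

end Valuation

end Monoid.Coprod

/-- Given a valuation `δ : G → I₀` and any group `K`, the map
`δ ∗ 0 : G ∗ K → I₀`, sending `x` with reduced expression `u₀v₁u₁⋯v_nu_n` to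
`δ(u₀) ∨ ⋯ ∨ δ(u_n)` (equivalently, the minimum over all expressions of `x` as a product of
letters of the join of the letter values), is a valuation on `G ∗ K` extending `δ`, with
`(δ ∗ 0)(K) = 0`, whose level subgroup `(G ∗ K)_{δ∗0}(b)` equals the subgroup generated by
`G_δ(b)` and `K`, which is their free product `G_δ(b) ∗ K`. -/
theorem stmt11 {G K : Type*} [Group G] [Group K] {I₀ : Type*} [SemilatticeSup I₀]
    [OrderBot I₀] (δ : G → I₀) (h1 : δ 1 = ⊥) (hinv : ∀ g : G, δ g⁻¹ = δ g)
    (hmul : ∀ g h : G, δ (g * h) ≤ δ g ⊔ δ h) :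
    ∃ δ₁ : Monoid.Coprod G K → I₀,
      -- δ₁ is a valuation
      (δ₁ 1 = ⊥) ∧ (∀ x, δ₁ x⁻¹ = δ₁ x) ∧ (∀ x y, δ₁ (x * y) ≤ δ₁ x ⊔ δ₁ y) ∧
      -- δ₁ extends δ and vanishes on K
      (∀ g : G, δ₁ (Monoid.Coprod.inl g) = δ g) ∧
      (∀ k : K, δ₁ (Monoid.Coprod.inr k) = ⊥) ∧
      -- δ₁ x is the minimum over all expressions of x as a product of letters of the
      -- join of the letter values (this minimum being attained at the reduced expression)
      (∀ (x : Monoid.Coprod G K) (l : List (G ⊕ K)), (l.map letterProd).prod = x →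
        δ₁ x ≤ wordVal δ l) ∧
      (∀ x : Monoid.Coprod G K, ∃ l : List (G ⊕ K),
        (l.map letterProd).prod = x ∧ wordVal δ l = δ₁ x) ∧
      -- the level subgroups are the subgroups generated by G_δ(b) and K …
      (∀ b : I₀, {x : Monoid.Coprod G K | δ₁ x ≤ b} =
        (Subgroup.closure
          ((fun g : G => Monoid.Coprod.inl g) '' {g : G | δ g ≤ b} ∪
            Set.range (fun k : K => Monoid.Coprod.inr k)) : Set (Monoid.Coprod G K))) ∧
      -- … and these are canonically the free product G_δ(b) ∗ K
      (∀ b : I₀, Function.Injective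
        (Monoid.Coprod.lift
          ((Monoid.Coprod.inl : G →* Monoid.Coprod G K).comp
            (levelSubgroup δ h1 hinv hmul b).subtype)
          (Monoid.Coprod.inr : K →* Monoid.Coprod G K))) := by
  have hδ : IsGroupValuation δ := ⟨h1, hinv, hmul⟩
  have hval := Coprod.isGroupValuation_extendByBot (K := K) hδ
  refine ⟨Coprod.extendByBot δ, hval.map_one, hval.map_inv, hval.map_mul_le,
    Coprod.extendByBot_inl h1, Coprod.extendByBot_inr h1, ?_,
    Coprod.exists_wordVal_eq_extendByBot, Coprod.setOf_extendByBot_le hδ, fun b => ?_⟩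
  · rintro x l rfl
    exact Coprod.extendByBot_list_prod_le hδ l
  · rw [← Coprod.lift_unique (Coprod.map_comp_inl _ (.id K))
      ((Coprod.map_comp_inr _ _).trans Coprod.inr.comp_id)]
    exact Coprod.map_injective (levelSubgroup δ h1 hinv hmul b).subtype_injective
      Function.injective_id
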